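/- Minimum rank distance of folded Gabidulin codes: the h-folded Gabidulin code of length g = n/h and dimension k (with h | n, n ≤ m) has minimum rank distance d_r = g − ⌈k/h⌉ + 1. -/

import Mathlib

/-!
A codeword is the `g × h` array of values `L_f(α^(ih+j))` of the `F_q`-linear map
`L_f x = ∑ f_i x^(q^i)`, whose kernel has dimension at most `k - 1` because its elements are roots
of a nonzero polynomial of degree at most `q^(k-1)`. An `F_q`-relation `c` between the rows gives,
for every fold `j`, the element `∑ c_i α^(ih+j)` of that kernel; since the `α^(ih+j)` are
linearly independent, the left kernel of the codeword matrix has dimension at most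
`⌊(k-1)/h⌋`, so the rank is at least `g - ⌊(k-1)/h⌋ = g - ⌈k/h⌉ + 1`. Conversely, fewer than `k`
linear conditions over `F_{q^m}` on `f` make `L_f` vanish at `α^0, …, α^(sh-1)` for
`s = ⌊(k-1)/h⌋`, which kills the first `s` rows.
-/

open Module Matrix Polynomial

theorem Matrix.rank_add_finrank_ker_vecMulLinear {K m n : Type*} [Field K] [Fintype m]
    [Fintype n] (M : Matrix m n K) :
    M.rank + finrank K (LinearMap.ker M.vecMulLinear) = Fintype.card m := by
  rw [rank_eq_finrank_span_row, ← range_vecMulLinear, LinearMap.finrank_range_add_finrank_ker,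
    finrank_fintype_fun_eq_card]

section Folded

variable {K V E ι η κ : Type*} [Field K] [AddCommGroup V] [Module K V] [AddCommGroup E]
  [Module K E]

noncomputable def foldedMatrix (b : Basis κ K E) (L : V →ₗ[K] E) (x : ι → η → V) :
    Matrix ι (η × κ) K :=
  of fun i jc => b.repr (L (x i jc.1)) jc.2

theorem foldedMatrix_rank_le_card [Fintype η] [Fintype κ] (b : Basis κ K E) (L : V →ₗ[K] E)
    (x : ι → η → V) (S : Finset ι) (hS : ∀ i ∉ S, ∀ j, L (x i j) = 0) :
    (foldedMatrix b L x).rank ≤ S.card := by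
  refine rank_le_card_of_support_subset _ S fun i hi => ?_
  by_contra hiS
  refine hi (funext fun jc => ?_)
  simp [foldedMatrix, hS i hiS]

theorem sum_smul_mem_ker_of_mem_ker_vecMulLinear_foldedMatrix [Fintype ι] {b : Basis κ K E}
    {L : V →ₗ[K] E} {x : ι → η → V} {c : ι → K}
    (hc : c ∈ LinearMap.ker (foldedMatrix b L x).vecMulLinear) (j : η) :
    ∑ i, c i • x i j ∈ LinearMap.ker L := by
  rw [LinearMap.mem_ker, ← b.repr.map_eq_zero_iff]
  ext c'
  simpa [vecMul, dotProduct, foldedMatrix] using congrFun (LinearMap.mem_ker.mp hc) (j, c')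

theorem card_mul_finrank_ker_vecMulLinear_foldedMatrix_le [Fintype ι] [Fintype η]
    [FiniteDimensional K V] (b : Basis κ K E) (L : V →ₗ[K] E) (x : ι → η → V)
    (hx : LinearIndependent K (Function.uncurry x)) :
    Fintype.card η * finrank K (LinearMap.ker (foldedMatrix b L x).vecMulLinear) ≤
      finrank K (LinearMap.ker L) := by
  set W := LinearMap.ker (foldedMatrix b L x).vecMulLinear
  let Ψ : (η → W) →ₗ[K] V :=
    ∑ j, Fintype.linearCombination K (fun i => x i j) ∘ₗ W.subtype ∘ₗ LinearMap.proj j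
  have hΨ : ∀ w, Ψ w = ∑ p : ι × η, (w p.2 : ι → K) p.1 • Function.uncurry x p := by
    intro w
    simp [Ψ, Fintype.linearCombination_apply, Fintype.sum_prod_type, Finset.sum_comm (γ := η)]
  have hΨinj : Function.Injective Ψ := by
    rw [← LinearMap.ker_eq_bot, LinearMap.ker_eq_bot']
    intro w hw
    have hw0 := Fintype.linearIndependent_iff.mp hx _ (hΨ w ▸ hw)
    exact funext fun j => Subtype.ext (funext fun i => hw0 (i, j))
  have hΨker : ∀ w, Ψ w ∈ LinearMap.ker L := fun w => by
    simpa [Ψ, Fintype.linearCombination_apply] using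
      Submodule.sum_mem _ fun j _ => sum_smul_mem_ker_of_mem_ker_vecMulLinear_foldedMatrix (w j).2 j
  calc Fintype.card η * finrank K W = finrank K (η → W) := by simp [finrank_pi_fintype]
    _ ≤ finrank K (LinearMap.ker L) :=
      LinearMap.finrank_le_finrank_of_injective (f := Ψ.codRestrict _ hΨker)
        fun a b hab => hΨinj congr(Subtype.val $hab)

theorem card_sub_finrank_ker_div_le_rank_foldedMatrix [Fintype ι] [Fintype η] [Nonempty η]
    [Fintype κ] [FiniteDimensional K V] (b : Basis κ K E) (L : V →ₗ[K] E) (x : ι → η → V)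
    (hx : LinearIndependent K (Function.uncurry x)) :
    Fintype.card ι - finrank K (LinearMap.ker L) / Fintype.card η ≤ (foldedMatrix b L x).rank := by
  have hrank := (foldedMatrix b L x).rank_add_finrank_ker_vecMulLinear
  have hker : finrank K (LinearMap.ker (foldedMatrix b L x).vecMulLinear) ≤
      finrank K (LinearMap.ker L) / Fintype.card η :=
    (Nat.le_div_iff_mul_le Fintype.card_pos).mpr <| by
      rw [mul_comm]; exact card_mul_finrank_ker_vecMulLinear_foldedMatrix_le b L x hx
  omega

end Folded

theorem card_pow_finrank_le_natDegree {K F : Type*} [Field K] [Fintype K] [Field F]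
    [Module K F] (V : Submodule K F) {P : F[X]} (hP : P ≠ 0) (hV : ∀ x ∈ V, P.IsRoot x) :
    Fintype.card K ^ finrank K V ≤ P.natDegree := by
  classical
  have hsub : (V : Set F) ⊆ P.roots.toFinset := fun x hx => by simpa [hP] using hV x hx
  have : Finite V := (P.roots.toFinset.finite_toSet.subset hsub).to_subtype
  have : Module.Finite K V := Module.Finite.of_finite
  calc Fintype.card K ^ finrank K V = Nat.card V := by
        rw [Module.natCard_eq_pow_finrank (K := K), Nat.card_eq_fintype_card]
    _ ≤ Nat.card (P.roots.toFinset : Set F) := Nat.card_mono P.roots.toFinset.finite_toSet hsub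
    _ ≤ P.natDegree := by
        rw [Nat.card_coe_set_eq, Set.ncard_coe_finset]
        exact (Multiset.toFinset_card_le _).trans P.card_roots'

section LinearizedPoly

variable {F : Type*} [Field F] {k q : ℕ}

noncomputable def linearizedPoly (q : ℕ) (f : Fin k → F) : F[X] :=
  ∑ i, C (f i) * X ^ q ^ (i : ℕ)

theorem linearizedPoly_ne_zero (hq : 1 < q) {f : Fin k → F} (hf : f ≠ 0) :
    linearizedPoly q f ≠ 0 := by
  obtain ⟨i₀, hi₀⟩ := Function.ne_iff.mp hf
  have hcoeff : (linearizedPoly q f).coeff (q ^ (i₀ : ℕ)) = f i₀ := by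
    simp [linearizedPoly, (Nat.pow_right_injective hq).eq_iff, Fin.val_inj]
  exact fun h => hi₀ (by simpa [h] using hcoeff.symm)

theorem natDegree_linearizedPoly_le (hq : 0 < q) (f : Fin k → F) :
    (linearizedPoly q f).natDegree ≤ q ^ (k - 1) :=
  natDegree_sum_le_of_forall_le _ _ fun i _ =>
    (natDegree_C_mul_X_pow_le _ _).trans (Nat.pow_le_pow_right hq (by omega))

end LinearizedPoly

section LinearizedMap

variable (Fq : Type*) {F : Type*} [Field Fq] [Fintype Fq] [Field F] [Algebra Fq F] {k : ℕ}

noncomputable def linearizedMap (f : Fin k → F) : F →ₗ[Fq] F :=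
  ∑ i, f i • (FiniteField.frobeniusAlgHom Fq F ^ (i : ℕ)).toLinearMap

theorem linearizedMap_apply (f : Fin k → F) (x : F) :
    linearizedMap Fq f x = ∑ i, f i * x ^ Fintype.card Fq ^ (i : ℕ) := by
  simp [linearizedMap, AlgHom.coe_pow, FiniteField.coe_frobeniusAlgHom, pow_iterate]

theorem eval_linearizedPoly (f : Fin k → F) (x : F) :
    (linearizedPoly (Fintype.card Fq) f).eval x = linearizedMap Fq f x := by
  simp [linearizedPoly, linearizedMap_apply, eval_finsetSum]

theorem finrank_ker_linearizedMap_le {f : Fin k → F} (hf : f ≠ 0) :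
    finrank Fq (LinearMap.ker (linearizedMap Fq f)) ≤ k - 1 := by
  have hq : 1 < Fintype.card Fq := Fintype.one_lt_card
  have hroots := card_pow_finrank_le_natDegree (LinearMap.ker (linearizedMap Fq f))
    (linearizedPoly_ne_zero hq hf) fun x hx => by simpa [IsRoot, eval_linearizedPoly] using hx
  exact (Nat.pow_le_pow_iff_right hq).mp
    (hroots.trans (natDegree_linearizedPoly_le (by omega) f))

theorem exists_ne_zero_forall_linearizedMap_eq_zero {ι : Type*} [Fintype ι] (y : ι → F)
    (hcard : Fintype.card ι < k) :
    ∃ f : Fin k → F, f ≠ 0 ∧ ∀ t, linearizedMap Fq f (y t) = 0 := by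
  let A : Matrix ι (Fin k) F := of fun t i => y t ^ Fintype.card Fq ^ (i : ℕ)
  have hker : LinearMap.ker A.mulVecLin ≠ ⊥ :=
    LinearMap.ker_ne_bot_of_finrank_lt (by simpa using hcard)
  obtain ⟨f, hf, hf0⟩ := Submodule.exists_mem_ne_zero_of_ne_bot hker
  refine ⟨f, hf0, fun t => ?_⟩
  simpa [linearizedMap_apply, A, mulVec, dotProduct, mul_comm] using
    congrFun (LinearMap.mem_ker.mp hf) t

end LinearizedMap

theorem linearIndependent_pow_of_forall_exists_pow_eq {K F : Type*} [Field K] [Field F]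
    [Algebra K F] [FiniteDimensional K F] {α : F} (hα : ∀ x : F, x ≠ 0 → ∃ i : ℕ, α ^ i = x) :
    LinearIndependent K fun i : Fin (finrank K F) => α ^ (i : ℕ) := by
  have htop : IntermediateField.adjoin K {α} = ⊤ := by
    refine eq_top_iff.mpr fun x _ => ?_
    rcases eq_or_ne x 0 with rfl | hx
    · exact zero_mem _
    · obtain ⟨i, rfl⟩ := hα x hx
      exact pow_mem (IntermediateField.mem_adjoin_simple_self K α) i
  have hdeg : (minpoly K α).natDegree = finrank K F := by
    rw [← IntermediateField.adjoin.finrank (Algebra.IsIntegral.isIntegral α), htop,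
      IntermediateField.finrank_top']
  exact hdeg ▸ linearIndependent_pow α

theorem LinearIndependent.pow_mul_add {K R : Type*} [Field K] [Ring R] [Algebra K R] {α : R}
    {m g h : ℕ} (hα : LinearIndependent K fun i : Fin m => α ^ (i : ℕ)) (hgh : g * h ≤ m) :
    LinearIndependent K fun p : Fin g × Fin h => α ^ ((p.1 : ℕ) * h + p.2) := by
  convert hα.comp _ ((Fin.castLE_injective hgh).comp finProdFinEquiv.injective) using 2 with p
  simp [finProdFinEquiv, add_comm, mul_comm]

theorem folded_gabidulin_minimum_rank_distance_general (Fq F : Type*) [Field Fq] [Fintype Fq]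
    [Field F] [Algebra Fq F]
    (m n h k : ℕ) (hh0 : 0 < h) (hdvd : h ∣ n) (hnm : n ≤ m) (hk : 0 < k) (hkn : k ≤ n)
    (hm : Module.finrank Fq F = m)
    (β : Module.Basis (Fin m) Fq F) (α : F) (hα : ∀ x : F, x ≠ 0 → ∃ i : ℕ, α ^ i = x) :
    IsLeast
      { r : ℕ | ∃ f : Fin k → F, f ≠ 0 ∧
          (Matrix.of fun (i : Fin (n / h)) (jb : Fin h × Fin m) =>
            β.repr
              (∑ idx : Fin k,
                f idx * (α ^ ((i : ℕ) * h + (jb.1 : ℕ))) ^ (Fintype.card Fq) ^ (idx : ℕ))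
              jb.2).rank = r }
      (n / h - (k + h - 1) / h + 1) := by
  have : FiniteDimensional Fq F := .of_finrank_pos (by omega)
  have : NeZero h := ⟨hh0.ne'⟩
  set g := n / h
  set s := (k - 1) / h
  have hgh : g * h = n := Nat.div_mul_cancel hdvd
  have hsh : s * h ≤ k - 1 := Nat.div_mul_le_self _ _
  have hsg : s < g := Nat.lt_of_mul_lt_mul_right (a := h) (by omega)
  set x : Fin g → Fin h → F := fun i j => α ^ ((i : ℕ) * h + j)
  have hx : LinearIndependent Fq (Function.uncurry x) :=
    (hm ▸ linearIndependent_pow_of_forall_exists_pow_eq hα).pow_mul_add (by omega)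
  have hcodeword : ∀ f : Fin k → F, (Matrix.of fun (i : Fin g) (jb : Fin h × Fin m) =>
      β.repr (∑ idx : Fin k,
        f idx * (α ^ ((i : ℕ) * h + (jb.1 : ℕ))) ^ (Fintype.card Fq) ^ (idx : ℕ)) jb.2) =
      foldedMatrix β (linearizedMap Fq f) x := by
    intro f; ext; simp [foldedMatrix, linearizedMap_apply, x]
  have hlower : ∀ f : Fin k → F, f ≠ 0 → g - s ≤ (foldedMatrix β (linearizedMap Fq f) x).rank := by
    intro f hf
    have hker := Nat.div_le_div_right (c := h) (finrank_ker_linearizedMap_le Fq hf)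
    have := card_sub_finrank_ker_div_le_rank_foldedMatrix β (linearizedMap Fq f) x hx
    simp only [Fintype.card_fin] at this
    omega
  have hval : g - (k + h - 1) / h + 1 = g - s := by
    rw [show k + h - 1 = k - 1 + h by omega, Nat.add_div_right _ hh0]
    omega
  simp only [hcodeword, hval]
  refine ⟨?_, fun r ⟨f, hf, hr⟩ => hr ▸ hlower f hf⟩
  obtain ⟨f, hf, hzero⟩ := exists_ne_zero_forall_linearizedMap_eq_zero Fq (k := k)
    (fun p : Fin s × Fin h => x (Fin.castLT p.1 (p.1.2.trans hsg)) p.2)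
    (by simp; omega)
  refine ⟨f, hf, le_antisymm ?_ (hlower f hf)⟩
  simpa using foldedMatrix_rank_le_card β (linearizedMap Fq f) x (Finset.Ici ⟨s, hsg⟩)
    fun i hi j => hzero (⟨i, by simpa [Fin.lt_def] using hi⟩, j)

/-- Minimum rank distance of folded Gabidulin codes: the `h`-folded Gabidulin
code of length `g = n/h` and dimension `k` (with `h | n`, `n ≤ m`, `α` a primitive element of
`F_{q^m}`), whose codewords are the `g×h` matrices with `(i,j)` entry `f(α^{ih+j})` for `f` a
linearized polynomial of q-degree `< k`, has minimum rank distance `d_r = g − ⌈k/h⌉ + 1`,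
where the rank of a codeword is the `F_q`-rank of its `g×(hm)` expansion. -/
theorem folded_gabidulin_minimum_rank_distance (Fq F : Type*) [Field Fq] [Fintype Fq]
    [Field F] [Fintype F] [Algebra Fq F]
    (m n h k : ℕ) (hh0 : 0 < h) (hdvd : h ∣ n) (hnm : n ≤ m) (hk : 0 < k) (hkn : k ≤ n)
    (hm : Module.finrank Fq F = m)
    (β : Module.Basis (Fin m) Fq F) (α : F) (hα : ∀ x : F, x ≠ 0 → ∃ i : ℕ, α ^ i = x) :
    IsLeast
      { r : ℕ | ∃ f : Fin k → F, f ≠ 0 ∧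
          (Matrix.of fun (i : Fin (n / h)) (jb : Fin h × Fin m) =>
            β.repr
              (∑ idx : Fin k,
                f idx * (α ^ ((i : ℕ) * h + (jb.1 : ℕ))) ^ (Fintype.card Fq) ^ (idx : ℕ))
              jb.2).rank = r }
      (n / h - (k + h - 1) / h + 1) :=
  folded_gabidulin_minimum_rank_distance_general Fq F m n h k hh0 hdvd hnm hk hkn hm β α hα
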